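/- arXiv:1806.07947 — 2 statements merged into one kernel-verified Lean document; each statement's English description precedes it below -/
import Mathlib

section
/- Let $\mathcal{F}(x,t)$ and $\mathcal{G}(x,t) = \mathcal{F}(x,t) - e^{-\Omega t}\Omega P(x)$ where $\Omega P(x) = C(x)$ is a fixed vector for each $x$, and suppose the time average $\langle e^{-\Omega t} C(x) \rangle_t = 0$ and $\langle e^{-\Omega t} F(e^{\Omega t}x, t) \rangle$ exists. Define $\bar{\mathcal{F}}(x) = \langle \mathcal{F}(x,t)\rangle_t$, $\bar{\mathcal{G}}(x) = \langle \mathcal{G}(x,t)\rangle_t$, $\Delta\mathcal{F} = \mathcal{F} - \bar{\mathcal{F}}$, $\Delta\mathcal{G} = \mathcal{G} - \bar{\mathcal{G}}$. If moreover $\mathcal{F}(x,t)=e^{-\Omega t}F(e^{\Omega t}x,t)$ with $\Omega$ skew-symmetric real, $e^{-\Omega t}$ orthogonal, and $C(x) = \langle F(e^{\Omega t}x, t)\rangle_t$, then the inner product $\langle (\Delta\mathcal{F}(x,t) - \Delta\mathcal{G}(x,t))^T \Delta\mathcal{G}(x,t) \rangle_t = 0$ for every $x$. -/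
/-!
Write `R t = e^{-Ωt}` (orthogonal since `Ω` is skew) and `Fₓ t = F(e^{Ωt}x, t)`, so that
`𝓕 = R Fₓ` and `𝓖 = R Fₓ - R C`. As `⟨R C⟩_t = 0`, the averages `F̄` and `Ḡ` agree and
`Δ𝓕 - Δ𝓖 = R C`. Orthogonality of `R` turns `(R C)ᵀ(R Fₓ - R C - Ḡ)` into
`Cᵀ Fₓ - |C|² - Ḡᵀ R C`, whose time average is `|C|² - |C|² - 0 = 0`.
-/
open Matrix Filter MeasureTheory intervalIntegral

section SkewExp

variable {m : Type*} [Fintype m] [DecidableEq m]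

open scoped Norms.Operator in
theorem Matrix.continuous_exp_smul (A : Matrix m m ℝ) :
    Continuous fun t : ℝ => NormedSpace.exp (t • A) := by
  fun_prop

theorem Matrix.transpose_exp_mul_exp_of_skew {A : Matrix m m ℝ} (hA : Aᵀ = -A) :
    (NormedSpace.exp A)ᵀ * NormedSpace.exp A = 1 := by
  rw [← Matrix.exp_transpose, hA, ← Matrix.exp_add_of_commute _ _ (Commute.refl A).neg_left,
    neg_add_cancel, NormedSpace.exp_zero]

theorem Matrix.mulVec_dotProduct_mulVec_of_transpose_mul_self {Q : Matrix m m ℝ}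
    (hQ : Qᵀ * Q = 1) (u v : m → ℝ) : (Q *ᵥ u) ⬝ᵥ (Q *ᵥ v) = u ⬝ᵥ v := by
  rw [dotProduct_mulVec, ← mulVec_transpose, mulVec_mulVec, hQ, one_mulVec]

end SkewExp

section TimeAverage

variable {E F : Type*} [NormedAddCommGroup E] [NormedSpace ℝ E]

/-- `⟨f⟩_t = a` in the notation of the statement. -/
def HasTimeAverage (f : ℝ → E) (a : E) : Prop :=
  Tendsto (fun T : ℝ => (1 / T) • ∫ t in (0:ℝ)..T, f t) atTop (nhds a)

theorem HasTimeAverage.unique {f : ℝ → E} {a b : E} (ha : HasTimeAverage f a)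
    (hb : HasTimeAverage f b) : a = b :=
  tendsto_nhds_unique ha hb

theorem HasTimeAverage.add {f g : ℝ → E} {a b : E} (hf : HasTimeAverage f a)
    (hg : HasTimeAverage g b) (hfi : ∀ T, IntervalIntegrable f volume 0 T)
    (hgi : ∀ T, IntervalIntegrable g volume 0 T) :
    HasTimeAverage (fun t => f t + g t) (a + b) :=
  (Tendsto.add hf hg).congr fun T => by rw [integral_add (hfi T) (hgi T), smul_add]

theorem HasTimeAverage.sub {f g : ℝ → E} {a b : E} (hf : HasTimeAverage f a)
    (hg : HasTimeAverage g b) (hfi : ∀ T, IntervalIntegrable f volume 0 T)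
    (hgi : ∀ T, IntervalIntegrable g volume 0 T) :
    HasTimeAverage (fun t => f t - g t) (a - b) :=
  (Tendsto.sub hf hg).congr fun T => by rw [integral_sub (hfi T) (hgi T), smul_sub]

variable [CompleteSpace E] [NormedAddCommGroup F] [NormedSpace ℝ F] [CompleteSpace F]

theorem hasTimeAverage_const (c : E) : HasTimeAverage (fun _ => c) c := by
  refine tendsto_const_nhds.congr' ?_
  filter_upwards [eventually_gt_atTop (0:ℝ)] with T hT
  rw [intervalIntegral.integral_const, sub_zero, smul_smul, one_div_mul_cancel hT.ne', one_smul]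

theorem HasTimeAverage.map {f : ℝ → E} {a : E} (hf : HasTimeAverage f a)
    (hfi : ∀ T, IntervalIntegrable f volume 0 T) (L : E →L[ℝ] F) :
    HasTimeAverage (fun t => L (f t)) (L a) :=
  ((L.continuous.tendsto a).comp hf).congr fun T => by
    rw [Function.comp_apply, L.map_smul, L.intervalIntegral_comp_comm (hfi T)]

theorem HasTimeAverage.const_dotProduct {ι : Type*} [Fintype ι] {f : ℝ → ι → ℝ} {a : ι → ℝ}
    (hf : HasTimeAverage f a) (hfi : ∀ T, IntervalIntegrable f volume 0 T) (c : ι → ℝ) :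
    HasTimeAverage (fun t => c ⬝ᵥ f t) (c ⬝ᵥ a) :=
  hf.map hfi (LinearMap.toContinuousLinearMap (dotProductBilin ℝ ℝ c))

end TimeAverage

theorem hasTimeAverage_dotProduct_rotated {m : Type*} [Fintype m] [DecidableEq m]
    {R : ℝ → Matrix m m ℝ} {f : ℝ → m → ℝ} {c : m → ℝ} (hR : Continuous R) (hf : Continuous f)
    (horth : ∀ t, (R t)ᵀ * R t = 1) (hfc : HasTimeAverage f c)
    (hRc : HasTimeAverage (fun t => R t *ᵥ c) 0) (g : m → ℝ) :
    HasTimeAverage (fun t => (R t *ᵥ c) ⬝ᵥ (R t *ᵥ f t - R t *ᵥ c - g)) 0 := by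
  have hRc_cont : Continuous fun t => R t *ᵥ c := hR.matrix_mulVec continuous_const
  have hcf : Continuous fun t => c ⬝ᵥ f t := continuous_const.dotProduct hf
  have hgRc : Continuous fun t => g ⬝ᵥ (R t *ᵥ c) := continuous_const.dotProduct hRc_cont
  have hlim := HasTimeAverage.sub
    (HasTimeAverage.sub (hfc.const_dotProduct (fun T => hf.intervalIntegrable 0 T) c)
      (hasTimeAverage_const (c ⬝ᵥ c)) (fun T => hcf.intervalIntegrable 0 T)
      (fun _ => intervalIntegrable_const))
    (hRc.const_dotProduct (fun T => hRc_cont.intervalIntegrable 0 T) g)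
    (fun T => (hcf.sub continuous_const).intervalIntegrable 0 T)
    (fun T => hgRc.intervalIntegrable 0 T)
  rw [sub_self, dotProduct_zero, sub_zero] at hlim
  convert hlim using 2 with t
  rw [dotProduct_sub, dotProduct_sub, mulVec_dotProduct_mulVec_of_transpose_mul_self (horth t),
    mulVec_dotProduct_mulVec_of_transpose_mul_self (horth t), dotProduct_comm g]

theorem stmt3_general (d : ℕ)
    (Ω : Matrix (Fin d) (Fin d) ℝ) (hskew : Ωᵀ = -Ω)
    (F : (Fin d → ℝ) → ℝ → (Fin d → ℝ))
    (hFcont : Continuous fun p : (Fin d → ℝ) × ℝ => F p.1 p.2)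
    (C P : (Fin d → ℝ) → (Fin d → ℝ))
    (hP : ∀ y, Ω.mulVec (P y) = C y)
    (calF calG : (Fin d → ℝ) → ℝ → (Fin d → ℝ))
    (hcalF : ∀ y t, calF y t =
      (NormedSpace.exp (-(t • Ω))).mulVec (F ((NormedSpace.exp (t • Ω)).mulVec y) t))
    (hcalG : ∀ y t, calG y t =
      calF y t - (NormedSpace.exp (-(t • Ω))).mulVec (Ω.mulVec (P y)))
    (Fbar Gbar : (Fin d → ℝ) → (Fin d → ℝ))
    (x : Fin d → ℝ)
    (hCzero : Tendsto (fun T : ℝ =>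
        (1 / T) • ∫ t in (0:ℝ)..T, (NormedSpace.exp (-(t • Ω))).mulVec (C x))
      atTop (nhds 0))
    (hC : Tendsto (fun T : ℝ =>
        (1 / T) • ∫ t in (0:ℝ)..T, F ((NormedSpace.exp (t • Ω)).mulVec x) t)
      atTop (nhds (C x)))
    (hFbar : Tendsto (fun T : ℝ => (1 / T) • ∫ t in (0:ℝ)..T, calF x t)
      atTop (nhds (Fbar x)))
    (hGbar : Tendsto (fun T : ℝ => (1 / T) • ∫ t in (0:ℝ)..T, calG x t)
      atTop (nhds (Gbar x))) :
    Tendsto (fun T : ℝ =>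
        (1 / T) * ∫ t in (0:ℝ)..T,
          dotProduct ((calF x t - Fbar x) - (calG x t - Gbar x)) (calG x t - Gbar x))
      atTop (nhds 0) := by
  set R : ℝ → Matrix (Fin d) (Fin d) ℝ := fun t => NormedSpace.exp (-(t • Ω))
  set Fx : ℝ → Fin d → ℝ := fun t => F (NormedSpace.exp (t • Ω) *ᵥ x) t
  have hR : Continuous R := by simpa only [smul_neg] using continuous_exp_smul (-Ω)
  have hFx : Continuous Fx :=
    hFcont.comp (((continuous_exp_smul Ω).matrix_mulVec continuous_const).prodMk continuous_id)
  have horth : ∀ t, (R t)ᵀ * R t = 1 := fun t =>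
    transpose_exp_mul_exp_of_skew (by rw [transpose_neg, transpose_smul, hskew, smul_neg])
  have hcalG_eq : calG x = fun t => R t *ᵥ Fx t - R t *ᵥ C x := funext fun t => by
    rw [hcalG, hcalF, hP]
  have hFG : Fbar x = Gbar x := by
    have hRc : Continuous fun t => R t *ᵥ C x := hR.matrix_mulVec continuous_const
    have hcalGc : Continuous (calG x) := hcalG_eq ▸ (hR.matrix_mulVec hFx).sub hRc
    have hsum := HasTimeAverage.add hGbar hCzero (fun T => hcalGc.intervalIntegrable 0 T)
      (fun T => hRc.intervalIntegrable 0 T)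
    have hcalF_eq : (fun t => calG x t + R t *ᵥ C x) = calF x := funext fun t => by
      rw [hcalG, hP, sub_add_cancel]
    rw [hcalF_eq, add_zero] at hsum
    exact HasTimeAverage.unique hFbar hsum
  have hΔ : ∀ t, (calF x t - Fbar x) - (calG x t - Gbar x) = R t *ᵥ C x := fun t => by
    rw [hcalG, hP, hFG]; abel
  simp_rw [hΔ, hcalG_eq]
  exact hasTimeAverage_dotProduct_rotated hR hFx horth hC hCzero (Gbar x)

/-- orthogonality in Theorem 1: with
`𝓕(x,t) = e^{-Ω t} F(e^{Ω t} x, t)`, `𝓖(x,t) = 𝓕(x,t) - e^{-Ω t} Ω P(x)`,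
`Ω P(x) = C(x) = ⟨F(e^{Ω t} x, t)⟩_t`, `⟨e^{-Ω t} C(x)⟩_t = 0`, and
`F̄(x) = ⟨𝓕(x,t)⟩_t`, `Ḡ(x) = ⟨𝓖(x,t)⟩_t`, the time average of
`(Δ𝓕 - Δ𝓖)ᵀ Δ𝓖` vanishes. -/
theorem stmt3 (d : ℕ)
    (Ω : Matrix (Fin d) (Fin d) ℝ) (hskew : Ωᵀ = -Ω)
    (F : (Fin d → ℝ) → ℝ → (Fin d → ℝ))
    (hFcont : Continuous fun p : (Fin d → ℝ) × ℝ => F p.1 p.2)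
    (hFbdd : ∃ M : ℝ, ∀ x t, ‖F x t‖ ≤ M)
    (C P : (Fin d → ℝ) → (Fin d → ℝ))
    (hP : ∀ y, Ω.mulVec (P y) = C y)
    (calF calG : (Fin d → ℝ) → ℝ → (Fin d → ℝ))
    (hcalF : ∀ y t, calF y t =
      (NormedSpace.exp (-(t • Ω))).mulVec (F ((NormedSpace.exp (t • Ω)).mulVec y) t))
    (hcalG : ∀ y t, calG y t =
      calF y t - (NormedSpace.exp (-(t • Ω))).mulVec (Ω.mulVec (P y)))
    (Fbar Gbar : (Fin d → ℝ) → (Fin d → ℝ))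
    (x : Fin d → ℝ)
    (hCzero : Tendsto (fun T : ℝ =>
        (1 / T) • ∫ t in (0:ℝ)..T, (NormedSpace.exp (-(t • Ω))).mulVec (C x))
      atTop (nhds 0))
    (hC : Tendsto (fun T : ℝ =>
        (1 / T) • ∫ t in (0:ℝ)..T, F ((NormedSpace.exp (t • Ω)).mulVec x) t)
      atTop (nhds (C x)))
    (hFbar : Tendsto (fun T : ℝ => (1 / T) • ∫ t in (0:ℝ)..T, calF x t)
      atTop (nhds (Fbar x)))
    (hGbar : Tendsto (fun T : ℝ => (1 / T) • ∫ t in (0:ℝ)..T, calG x t)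
      atTop (nhds (Gbar x))) :
    Tendsto (fun T : ℝ =>
        (1 / T) * ∫ t in (0:ℝ)..T,
          dotProduct ((calF x t - Fbar x) - (calG x t - Gbar x)) (calG x t - Gbar x))
      atTop (nhds 0) :=
  stmt3_general d Ω hskew F hFcont C P hP calF calG hcalF hcalG Fbar Gbar x hCzero hC hFbar hGbar
end

section
/- For real $a, b, c, d$ and real $x$ with $\sin x = a$, $\cos x = b$: if the four equations $\sin u = a$, $\cos u = b$, $\sin v = p(a,b)$, $\cos v = q(a,b)$ are consistent (i.e., $a^2+b^2 = 1$ and $p^2+q^2 = 1$), then setting $a = 2\gamma\omega/(r\alpha)$, $b = -\epsilon\sigma/(4D^2\omega^2 r)$, the constraint $a^2 + b^2 = 1$ plus the second constraint $p^2 + q^2 = 1$, where $p = ((4D^3\sigma\omega^2 + \sigma^2\epsilon)b + 8D^2 r\sigma\omega^2)/(8D^5 F\omega^2)$ and $q = (-(4D^3\sigma\omega^2 + \sigma^2\epsilon)a - 16\beta D^5 r\omega^3)/(8D^5 F\omega^2)$, implies that $\sigma$ is a root of the quartic $A_0 + A_1\sigma + A_2\sigma^2 + A_3\sigma^3 + A_4\sigma^4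 = 0$ with $A_0 = 1024\beta^2\gamma^2 D^{10}\omega^8 - 64\alpha^2 D^{10} F^2\omega^4$, $A_1 = 256\alpha\beta\gamma D^8\omega^6$, $A_2 = 16\alpha^2\beta^2 D^6\omega^2\epsilon^2 + 16\alpha^2 D^6\omega^4 + 64\alpha\beta\gamma D^5\omega^4\epsilon + 256\gamma^2 D^4\omega^6$, $A_3 = -8\alpha^2 D^3\omega^2\epsilon$, $A_4 = \alpha^2\epsilon^2$. -/
/-!
Multiplying the definitions of `a` and `b` by `r` gives `r a` and `r b` as rational functions of
`σ` free of `r`, and `a² + b² = 1` gives `r² = (r a)² + (r b)²`. Clearing the common denominator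
of `p` and `q` and expanding `p² + q² = 1` with `a² + b² = 1` leaves an identity in which `r` enters
only through `r a`, `r b` and `r²`; substituting these and clearing denominators gives the quartic.
-/

theorem sq_add_sq_affine_eq_of_sq_add_sq_eq_one {R : Type*} [CommRing R] {a b : R}
    (hab : a ^ 2 + b ^ 2 = 1) (s r c d : R) :
    (s * b + r * c) ^ 2 + (s * a + r * d) ^ 2
      = s ^ 2 + 2 * s * (c * (r * b) + d * (r * a))
        + ((r * a) ^ 2 + (r * b) ^ 2) * (c ^ 2 + d ^ 2) := by
  linear_combination (s ^ 2 - r ^ 2 * (c ^ 2 + d ^ 2)) * hab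

/-- reduction of the CPUT fixed-point equations to the quartic
`A₀ + A₁σ + A₂σ² + A₃σ³ + A₄σ⁴ = 0` in `σ`. -/
theorem stmt9 (α β γ D F ω ε r σ a b p q : ℝ)
    (hα : α ≠ 0) (hD : D ≠ 0) (hF : F ≠ 0) (hω : ω ≠ 0) (hr : r ≠ 0)
    (ha : a = 2 * γ * ω / (r * α))
    (hb : b = -(ε * σ) / (4 * D ^ 2 * ω ^ 2 * r))
    (hp : p = ((4 * D ^ 3 * σ * ω ^ 2 + σ ^ 2 * ε) * b + 8 * D ^ 2 * r * σ * ω ^ 2)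
        / (8 * D ^ 5 * F * ω ^ 2))
    (hq : q = (-((4 * D ^ 3 * σ * ω ^ 2 + σ ^ 2 * ε) * a) - 16 * β * D ^ 5 * r * ω ^ 3)
        / (8 * D ^ 5 * F * ω ^ 2))
    (hab : a ^ 2 + b ^ 2 = 1)
    (hpq : p ^ 2 + q ^ 2 = 1) :
    (1024 * β ^ 2 * γ ^ 2 * D ^ 10 * ω ^ 8 - 64 * α ^ 2 * D ^ 10 * F ^ 2 * ω ^ 4)
      + (256 * α * β * γ * D ^ 8 * ω ^ 6) * σ
      + (16 * α ^ 2 * β ^ 2 * D ^ 6 * ω ^ 2 * ε ^ 2 + 16 * α ^ 2 * D ^ 6 * ω ^ 4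
          + 64 * α * β * γ * D ^ 5 * ω ^ 4 * ε + 256 * γ ^ 2 * D ^ 4 * ω ^ 6) * σ ^ 2
      + (-(8 * α ^ 2 * D ^ 3 * ω ^ 2 * ε)) * σ ^ 3
      + (α ^ 2 * ε ^ 2) * σ ^ 4 = 0 := by
  set s := 4 * D ^ 3 * σ * ω ^ 2 + σ ^ 2 * ε
  set K := 8 * D ^ 5 * F * ω ^ 2
  have hK : K ≠ 0 := by positivity
  have hpK : p * K = s * b + r * (8 * D ^ 2 * σ * ω ^ 2) := by
    rw [hp, div_mul_cancel₀ _ hK]; ring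
  have hqK : q * K = -(s * a + r * (16 * β * D ^ 5 * ω ^ 3)) := by
    rw [hq, div_mul_cancel₀ _ hK]; ring
  have hra : r * a = 2 * γ * ω / α := by rw [ha]; field_simp
  have hrb : r * b = -(ε * σ) / (4 * D ^ 2 * ω ^ 2) := by rw [hb]; field_simp
  have hcircle : (p * K) ^ 2 + (q * K) ^ 2 = K ^ 2 := by linear_combination K ^ 2 * hpq
  rw [hpK, hqK, neg_sq, sq_add_sq_affine_eq_of_sq_add_sq_eq_one hab, hra, hrb] at hcircle
  field_simp at hcircle
  linear_combination hcircle / 16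
end
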